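/- Let N ≥ 1. For i ∈ {0,…,N−2} define the CNOT action on basis strings g_i : (Fin N → Fin 2) → (Fin N → Fin 2) by (g_i x)(i+1) = x(i+1) + x(i) (mod 2) and (g_i x)(k) = x(k) for k ≠ i+1, and let g = g_{N−2} ∘ ⋯ ∘ g_1 ∘ g_0. Let v ∈ ℂ^{(Fin N → Fin 2)} be the vector with v(x) = 1/√2 if x(k) = 0 for all k ≥ 1, and v(x) = 0 otherwise (the state (H ⊗ I₂^{⊗(N−1)})|0…0⟩ obtained by a Hadamard on the first qubit). Then the pushed-forward vector w defined by w(x) = Σ_{y : g(y) = x} v(y) equals |GHZ_N⟩. In particular, g fixes the all-zeros string and maps the string (1,0,…,0) to the all-ones string, so the circuit consisting of a Hadamard on qubit 0 followed by the CNOT chain CNOT(0,1), CNOT(1,2), …, CNOT(N−2,N−1) applied to |0…0⟩ prepares the N-qubit GHZ state. -/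
import Mathlib


open BigOperators

noncomputable section

/-- The N-qubit GHZ state vector: entry `1/√2` at the all-zeros string and at the all-ones
string, and `0` elsewhere. -/
def ghz (N : ℕ) : (Fin N → Fin 2) → ℂ :=
  fun x => if x = (fun _ => 0) ∨ x = (fun _ => 1) then 1 / (Real.sqrt 2 : ℂ) else 0

/-- The action `g_i` of the CNOT gate with control qubit `i` and target qubit `i+1` on basis
strings: `(g_i x)(i+1) = x(i+1) + x(i) (mod 2)` and `(g_i x)(k) = x(k)` for `k ≠ i+1`. -/
def cnotAct (N : ℕ) (i : ℕ) (x : Fin N → Fin 2) : Fin N → Fin 2 :=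
  fun k => if h : (k : ℕ) = i + 1 ∧ i < N then x k + x ⟨i, h.2⟩ else x k

/-- The composed CNOT chain `g = g_{N−2} ∘ ⋯ ∘ g_1 ∘ g_0` on basis strings. -/
def chainAct (N : ℕ) (x : Fin N → Fin 2) : Fin N → Fin 2 :=
  (List.range (N - 1)).foldl (fun y i => cnotAct N i y) x

/-- The state `(H ⊗ I₂^{⊗(N−1)})|0…0⟩`: entry `1/√2` on strings vanishing outside qubit 0. -/
def hadZero (N : ℕ) : (Fin N → Fin 2) → ℂ :=
  fun x => if ∀ k : Fin N, 1 ≤ (k : ℕ) → x k = 0 then 1 / (Real.sqrt 2 : ℂ) else 0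

lemma fin2_add_self : ∀ a : Fin 2, a + a = 0 := by decide

lemma cnot_invol (N i : ℕ) (x : Fin N → Fin 2) : cnotAct N i (cnotAct N i x) = x := by
  funext k
  simp only [cnotAct]
  split_ifs with h h2
  · exact absurd h2.1 (by omega)
  · rw [add_assoc, fin2_add_self, add_zero]
  · rfl

lemma foldl_inj (N : ℕ) (l : List ℕ) : Function.Injective
    (fun x : Fin N → Fin 2 => l.foldl (fun y i => cnotAct N i y) x) := by
  induction l with
  | nil => intro a b h; simpa using h
  | cons i t ih =>
    intro a b h
    simp only [List.foldl_cons] at h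
    have := ih h
    have := congrArg (cnotAct N i) this
    rwa [cnot_invol, cnot_invol] at this

lemma chain_inj (N : ℕ) : Function.Injective (chainAct N) := foldl_inj N _

lemma chain_const (N : ℕ) (hN : 1 ≤ N) (c : Fin 2) :
    chainAct N (fun k => if (k : ℕ) = 0 then c else 0) = fun _ => c := by
  have key : ∀ m, m ≤ N →
      (List.range m).foldl (fun y i => cnotAct N i y) (fun k => if (k : ℕ) = 0 then c else 0)
        = fun k : Fin N => if (k : ℕ) ≤ m then c else 0 := by
    intro m
    induction m with
    | zero => intro _; simp [Nat.le_zero]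
    | succ m ih =>
      intro hm
      rw [List.range_succ, List.foldl_append, ih (by omega)]
      funext k
      simp only [List.foldl_cons, List.foldl_nil, cnotAct]
      by_cases h : (k : ℕ) = m + 1 ∧ m < N
      · rw [dif_pos h]
        simp only [h.1]
        rw [if_neg (by omega), if_pos (by omega), if_pos (by omega), zero_add]
      · rw [dif_neg h]
        have hk := k.isLt
        have : m < N := by omega
        have : (k : ℕ) ≠ m + 1 := fun hc => h ⟨hc, this⟩
        by_cases h2 : (k : ℕ) ≤ m
        · rw [if_pos h2, if_pos (by omega)]
        · rw [if_neg h2, if_neg (by omega)]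
  rw [chainAct, key (N - 1) (by omega)]
  funext k
  rw [if_pos (by omega)]

lemma chain_zero (N : ℕ) (hN : 1 ≤ N) : chainAct N (fun _ => 0) = fun _ => 0 := by
  have := chain_const N hN 0
  simpa using this

lemma had_eq_ghz (N : ℕ) (hN : 1 ≤ N) (y : Fin N → Fin 2) :
    hadZero N y = ghz N (chainAct N y) := by
  by_cases h : ∀ k : Fin N, 1 ≤ (k : ℕ) → y k = 0
  · have hy : y = fun k : Fin N => if (k : ℕ) = 0 then y ⟨0, hN⟩ else 0 := by
      funext k
      by_cases hk : (k : ℕ) = 0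
      · rw [if_pos hk]; congr 1; exact Fin.ext hk
      · rw [if_neg hk]; exact h k (by omega)
    rw [hadZero, if_pos h, hy, chain_const N hN, ghz, if_pos]
    rcases (show y ⟨0, hN⟩ = 0 ∨ y ⟨0, hN⟩ = 1 by
      rcases Fin.exists_fin_two.mp ⟨y ⟨0, hN⟩, rfl⟩ with h|h
      · exact Or.inl h
      · exact Or.inr h) with hc | hc
    · exact Or.inl (by rw [hc])
    · exact Or.inr (by rw [hc])
  · rw [hadZero, if_neg h, ghz, if_neg]
    rintro (hc | hc)
    · have : y = fun _ => 0 := chain_inj N (hc.trans (chain_zero N hN).symm)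
      exact h fun k _ => by rw [this]
    · have : y = fun k : Fin N => if (k : ℕ) = 0 then 1 else 0 :=
        chain_inj N (hc.trans (chain_const N hN 1).symm)
      exact h fun k hk => by rw [this]; exact if_neg (by omega)

/-- The circuit of a Hadamard on qubit 0 followed by the CNOT chain
`CNOT(0,1), CNOT(1,2), …, CNOT(N−2,N−1)` applied to `|0…0⟩` prepares the N-qubit GHZ state:
the pushforward of `(H ⊗ I₂^{⊗(N−1)})|0…0⟩` along `g` equals `|GHZ_N⟩`. In particular `g`
fixes the all-zeros string and maps `(1,0,…,0)` to the all-ones string. -/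
theorem ghz_circuit_preparation {N : ℕ} (hN : 1 ≤ N) :
    (fun x : Fin N → Fin 2 =>
      ∑ y ∈ Finset.univ.filter (fun y : Fin N → Fin 2 => chainAct N y = x), hadZero N y)
      = ghz N ∧
    chainAct N (fun _ => 0) = (fun _ => 0) ∧
    chainAct N (fun k : Fin N => if (k : ℕ) = 0 then 1 else 0) = (fun _ => 1) := by
  refine ⟨?_, chain_zero N hN, chain_const N hN 1⟩
  funext x
  obtain ⟨y0, hy0⟩ := Finite.injective_iff_surjective.mp (chain_inj N) x
  have hfilter : Finset.univ.filter (fun y : Fin N → Fin 2 => chainAct N y = x) = {y0} := by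
    ext y
    simp only [Finset.mem_filter, Finset.mem_univ, true_and, Finset.mem_singleton]
    constructor
    · intro hx; exact chain_inj N (hx.trans hy0.symm)
    · intro hx; rw [hx, hy0]
  rw [hfilter, Finset.sum_singleton, had_eq_ghz N hN, hy0]
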